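/- arXiv:2511.21065 — 8 statements merged into one kernel-verified Lean document; each statement's English description precedes it below -/
import Mathlib

section
/- Let a, b, τ, η be real numbers with τ > 0 and 2τ − b²η² > 0. Set V(x) = (1 − τx²)² + η²(bx + ax²)², and define x⁺ = (−abη² + √(τ²(2τ − b²η²) + 2a²η²τ))/(τ² + a²η²) and x⁻ = (−abη² − √(τ²(2τ − b²η²) + 2a²η²τ))/(τ² + a²η²). Then x⁻ < 0 < x⁺, V(x⁺) = V(x⁻) = 1, V(x) < 1 for all x ∈ (0, x⁺), and V(x) < 1 for all x ∈ (x⁻, 0). -/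
/-!
Clearing the factor `x²` in `1 - V` leaves the quadratic `C - 2Bx - Ax²` with `A = τ² + a²η²`,
`B = abη²`, `C = 2τ - b²η²`, whose roots are `x⁻` and `x⁺`. Since `A > 0` and `C > 0` the roots
have opposite signs, and `1 - V x = A x² (x⁺ - x)(x - x⁻)` is positive between them except at `0`.
-/

open Set

section QuadraticRoots

variable {A B C : ℝ}

theorem quadratic_eq_mul_sub_root_mul_sub_root (hA : A ≠ 0) (hD : 0 ≤ B ^ 2 + A * C) (x : ℝ) :
    C - 2 * B * x - A * x ^ 2 =
      A * (((-B + √(B ^ 2 + A * C)) / A - x) * (x - (-B - √(B ^ 2 + A * C)) / A)) := by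
  have hs := Real.sq_sqrt hD
  set s := √(B ^ 2 + A * C)
  field_simp
  linear_combination -hs

theorem abs_lt_sqrt_sq_add_mul (hA : 0 < A) (hC : 0 < C) : |B| < √(B ^ 2 + A * C) :=
  (Real.lt_sqrt (abs_nonneg B)).mpr (by rw [sq_abs]; nlinarith [mul_pos hA hC])

theorem quadratic_root_sub_neg (hA : 0 < A) (hC : 0 < C) : (-B - √(B ^ 2 + A * C)) / A < 0 :=
  div_neg_of_neg_of_pos (by linarith [neg_le_abs B, abs_lt_sqrt_sq_add_mul (B := B) hA hC]) hA

theorem quadratic_root_add_pos (hA : 0 < A) (hC : 0 < C) : 0 < (-B + √(B ^ 2 + A * C)) / A :=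
  div_pos (by linarith [le_abs_self B, abs_lt_sqrt_sq_add_mul (B := B) hA hC]) hA

end QuadraticRoots

theorem eq_one_and_lt_one_of_one_sub_eq_sq_mul {V : ℝ → ℝ} {A r₁ r₂ : ℝ} (hA : 0 < A)
    (h : ∀ x, 1 - V x = x ^ 2 * (A * ((r₂ - x) * (x - r₁)))) :
    V r₂ = 1 ∧ V r₁ = 1 ∧ ∀ x ∈ Ioo r₁ r₂, x ≠ 0 → V x < 1 := by
  refine ⟨by linarith [h r₂], by linarith [h r₁], fun x ⟨hlo, hhi⟩ hx0 => ?_⟩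
  have : 0 < x ^ 2 * (A * ((r₂ - x) * (x - r₁))) := by
    have hx2 : 0 < x ^ 2 := by positivity
    exact mul_pos hx2 (mul_pos hA (mul_pos (by linarith) (by linarith)))
  linarith [h x]

/-- The hill intervals of the potential `V(x) = (1 − τx²)² + η²(bx + ax²)²`:
`x⁻ < 0 < x⁺`, `V(x⁺) = V(x⁻) = 1`, and `V < 1` on `(0,x⁺)` and on `(x⁻,0)`. -/
theorem stmt_2 (a b τ η : ℝ) (hτ : 0 < τ) (hC : 0 < 2*τ - b^2*η^2)
    (V : ℝ → ℝ) (hV : ∀ x, V x = (1 - τ*x^2)^2 + η^2*(b*x + a*x^2)^2)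
    (xp xm : ℝ)
    (hxp : xp = (-(a*b*η^2) + Real.sqrt (τ^2*(2*τ - b^2*η^2) + 2*a^2*η^2*τ))
        / (τ^2 + a^2*η^2))
    (hxm : xm = (-(a*b*η^2) - Real.sqrt (τ^2*(2*τ - b^2*η^2) + 2*a^2*η^2*τ))
        / (τ^2 + a^2*η^2)) :
    xm < 0 ∧ 0 < xp ∧ V xp = 1 ∧ V xm = 1 ∧
      (∀ x ∈ Set.Ioo 0 xp, V x < 1) ∧ (∀ x ∈ Set.Ioo xm 0, V x < 1) := by
  have hA : 0 < τ ^ 2 + a ^ 2 * η ^ 2 := by positivity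
  have hD : τ^2*(2*τ - b^2*η^2) + 2*a^2*η^2*τ
      = (a*b*η^2) ^ 2 + (τ^2 + a^2*η^2) * (2*τ - b^2*η^2) := by ring
  rw [hD] at hxp hxm
  have hxm_neg : xm < 0 := hxm ▸ quadratic_root_sub_neg hA hC
  have hxp_pos : 0 < xp := hxp ▸ quadratic_root_add_pos hA hC
  have hfactor : ∀ x, 1 - V x = x ^ 2 * ((τ^2 + a^2*η^2) * ((xp - x) * (x - xm))) := by
    intro x
    rw [hxp, hxm, ← quadratic_eq_mul_sub_root_mul_sub_root hA.ne' (by positivity), hV]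
    ring
  obtain ⟨hVp, hVm, hlt⟩ := eq_one_and_lt_one_of_one_sub_eq_sq_mul hA hfactor
  exact ⟨hxm_neg, hxp_pos, hVp, hVm,
    fun x hx => hlt x ⟨hxm_neg.trans hx.1, hx.2⟩ hx.1.ne',
    fun x hx => hlt x ⟨hx.1, hx.2.trans hxp_pos⟩ hx.2.ne⟩
end

section
/- Let a, b be real numbers and let V(x) = (1 − x²)² + (bx + ax²)². There exists x⁺ > 0 such that V(x⁺) = 1 and V(x) < 1 for all x ∈ (0, x⁺) if and only if b² < 2, or b² = 2 and ab < 0. -/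
lemma hill_aux (a b s : ℝ) (V : ℝ → ℝ)
    (hV : ∀ x, V x = (1 - x^2)^2 + (b*x + a*x^2)^2)
    (hs : 0 < s) (hb : b^2 ≤ 2)
    (hQ0 : (1+a^2)*s^2 + 2*a*b*s + (b^2-2) = 0) :
    V s = 1 ∧ ∀ x ∈ Set.Ioo 0 s, V x < 1 := by
  have key : ∀ x, V x - 1 = x^2 * ((1+a^2)*x^2 + 2*a*b*x + (b^2-2)) := fun x => by
    rw [hV]; ring
  constructor
  · have hk := key s; rw [hQ0, mul_zero] at hk; linarith
  · intro x hx
    obtain ⟨hx0, hxs⟩ := hx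
    have hden : (0:ℝ) < 1 + a^2 := by positivity
    have h2 : s*((1+a^2)*x^2 + 2*a*b*x + (b^2-2)) = (x - s)*((1+a^2)*s*x - (b^2-2)) := by
      linear_combination x * hQ0
    have hf2 : 0 < (1+a^2)*s*x - (b^2-2) := by
      have := mul_pos (mul_pos hden hs) hx0
      nlinarith
    have h3 : s * ((1+a^2)*x^2 + 2*a*b*x + (b^2-2)) < 0 := by
      rw [h2]; exact mul_neg_of_neg_of_pos (by linarith) hf2
    have hQx : (1+a^2)*x^2 + 2*a*b*x + (b^2-2) < 0 := by
      by_contra h; push_neg at h; nlinarith [mul_nonneg hs.le h]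
    have hk := key x
    nlinarith [mul_neg_of_pos_of_neg (pow_pos hx0 2) hQx]

/-- For `V(x) = (1 − x²)² + (bx + ax²)²` there is a hill interval `[0,x⁺]` with `x⁺ > 0`
iff `b² < 2`, or `b² = 2` and `ab < 0`. -/
theorem stmt_3 (a b : ℝ) (V : ℝ → ℝ)
    (hV : ∀ x, V x = (1 - x^2)^2 + (b*x + a*x^2)^2) :
    (∃ xp : ℝ, 0 < xp ∧ V xp = 1 ∧ ∀ x ∈ Set.Ioo 0 xp, V x < 1) ↔
      (b^2 < 2 ∨ (b^2 = 2 ∧ a*b < 0)) := by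
  have key : ∀ x, V x - 1 = x^2 * ((1+a^2)*x^2 + 2*a*b*x + (b^2-2)) := fun x => by
    rw [hV]; ring
  have hden : (0:ℝ) < 1 + a^2 := by positivity
  constructor
  · rintro ⟨xp, hxp, hVxp, hlt⟩
    by_contra hcon
    push_neg at hcon
    obtain ⟨hb2, himp⟩ := hcon
    rcases eq_or_lt_of_le hb2 with heq | hgt
    · -- b² = 2 and ab ≥ 0, contradiction
      have hab : 0 ≤ a*b := himp heq.symm
      set x := xp/2 with hxdef
      have hx0 : 0 < x := by positivity
      have hVx := hlt x ⟨hx0, by simp only [hxdef]; linarith⟩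
      have hk := key x
      have heq' : b^2 = 2 := heq.symm
      nlinarith [pow_pos hx0 4, sq_nonneg (a*x^2), mul_nonneg hab (pow_pos hx0 3).le,
        mul_pos (pow_pos hx0 2) hx0]
    · -- b² > 2: Q(x) > 0 for small x, contradiction
      have habs : (0:ℝ) < 2*|a*b|+1 := by positivity
      set m := (b^2-2)/(2*|a*b|+1) with hmdef
      have hm : 0 < m := div_pos (by linarith) habs
      set x := min xp m / 2 with hxdef
      have hx0 : 0 < x := by
        have := lt_min hxp hm
        simp only [hxdef]; linarith
      have hxlt : x < xp := by
        have h1 : min xp m ≤ xp := min_le_left _ _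
        simp only [hxdef]; linarith
      have hxm : x < m := by
        have h1 : min xp m ≤ m := min_le_right _ _
        simp only [hxdef]; linarith
      have hxb : x * (2*|a*b|+1) < b^2 - 2 := by
        rw [hmdef] at hxm
        exact (lt_div_iff₀ habs).mp hxm
      have hQpos : 0 < (1+a^2)*x^2 + 2*a*b*x + (b^2-2) := by
        have h1 : 0 ≤ (a*b + |a*b|) * x :=
          mul_nonneg (by linarith [neg_abs_le (a*b)]) hx0.le
        nlinarith [mul_pos hden (pow_pos hx0 2)]
      have hVx := hlt x ⟨hx0, hxlt⟩
      have hk := key x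
      nlinarith [mul_nonneg (sq_nonneg x) hQpos.le]
  · rintro (hb | ⟨hb, hab⟩)
    · -- b² < 2
      set D := a^2*b^2 + (1+a^2)*(2-b^2) with hDdef
      have hD : 0 < D := by nlinarith [sq_nonneg (a*b)]
      have hDab : a^2*b^2 < D := by nlinarith
      have hsq : Real.sqrt D ^ 2 = a^2*b^2 + (1+a^2)*(2-b^2) := by
        rw [Real.sq_sqrt hD.le]
      have hsqrt_pos : 0 < Real.sqrt D := Real.sqrt_pos.mpr hD
      have hgtab : a*b < Real.sqrt D := by
        nlinarith [Real.sqrt_nonneg D, sq_nonneg (Real.sqrt D + a*b)]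
      obtain ⟨s, hs_eq, hs_pos⟩ : ∃ s, (1+a^2)*s = -(a*b) + Real.sqrt D ∧ 0 < s := by
        refine ⟨(-(a*b) + Real.sqrt D)/(1+a^2), ?_, div_pos (by linarith) hden⟩
        field_simp
      have h1 : (1+a^2) * ((1+a^2)*s^2 + 2*a*b*s + (b^2-2)) = 0 := by
        linear_combination ((1+a^2)*s + a*b + Real.sqrt D) * hs_eq + hsq
      have hQ0 : (1+a^2)*s^2 + 2*a*b*s + (b^2-2) = 0 :=
        (mul_eq_zero.mp h1).resolve_left (ne_of_gt hden)
      exact ⟨s, hs_pos, (hill_aux a b s V hV hs_pos hb.le hQ0).1,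
        (hill_aux a b s V hV hs_pos hb.le hQ0).2⟩
    · -- b² = 2, ab < 0
      obtain ⟨s, hs_eq, hs_pos⟩ : ∃ s, (1+a^2)*s = -(2*a*b) ∧ 0 < s := by
        refine ⟨-(2*a*b)/(1+a^2), ?_, div_pos (by linarith) hden⟩
        field_simp
      have h1 : (1+a^2) * ((1+a^2)*s^2 + 2*a*b*s + (b^2-2)) = 0 := by
        linear_combination ((1+a^2)*s) * hs_eq + (1+a^2) * hb
      have hQ0 : (1+a^2)*s^2 + 2*a*b*s + (b^2-2) = 0 :=
        (mul_eq_zero.mp h1).resolve_left (ne_of_gt hden)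
      exact ⟨s, hs_pos, (hill_aux a b s V hV hs_pos hb.le hQ0).1,
        (hill_aux a b s V hV hs_pos hb.le hQ0).2⟩
end

section
/- Let a be a nonzero real number. Then the map (τ,η) ↦ (Θ¹₊(a,0;τ,η), Θ²₊(a,0;τ,η), Θ³₊(a,0;τ,η)), defined on the set {(τ,η) ∈ ℝ² : τ > 0}, is injective. -/
/-- The potential `V(x) = (1 − τx²)² + η²(bx + ax²)²`. -/
noncomputable def Vpot (a b τ η x : ℝ) : ℝ :=
  (1 - τ*x^2)^2 + η^2*(b*x + a*x^2)^2

/-- The right endpoint `x⁺` of the hill interval `[0, x⁺]`. -/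
noncomputable def xplus (a b τ η : ℝ) : ℝ :=
  (-(a*b*η^2) + Real.sqrt (τ^2*(2*τ - b^2*η^2) + 2*a^2*η^2*τ)) / (τ^2 + a^2*η^2)

/-- The left endpoint `x⁻` of the hill interval `[x⁻, 0]`. -/
noncomputable def xminus (a b τ η : ℝ) : ℝ :=
  (-(a*b*η^2) - Real.sqrt (τ^2*(2*τ - b^2*η^2) + 2*a^2*η^2*τ)) / (τ^2 + a^2*η^2)

/-- First component of the period map on the hill interval `[0, x⁺]`. -/
noncomputable def Theta1p (a b τ η : ℝ) : ℝ :=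
  ∫ x in (0:ℝ)..(xplus a b τ η), η*(b*x + a*x^2) / Real.sqrt (1 - Vpot a b τ η x)

/-- Second component of the period map on the hill interval `[0, x⁺]`. -/
noncomputable def Theta2p (a b τ η : ℝ) : ℝ :=
  ∫ x in (0:ℝ)..(xplus a b τ η), x^2*(1 - τ*x^2) / Real.sqrt (1 - Vpot a b τ η x)

/-- Third component of the period map on the hill interval `[0, x⁺]`. -/
noncomputable def Theta3p (a b τ η : ℝ) : ℝ :=
  ∫ x in (0:ℝ)..(xplus a b τ η), η*(b*x + a*x^2)^2 / Real.sqrt (1 - Vpot a b τ η x)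

/-- First component of the period map on the hill interval `[x⁻, 0]`. -/
noncomputable def Theta1m (a b τ η : ℝ) : ℝ :=
  ∫ x in (xminus a b τ η)..(0:ℝ), η*(b*x + a*x^2) / Real.sqrt (1 - Vpot a b τ η x)

/-- Second component of the period map on the hill interval `[x⁻, 0]`. -/
noncomputable def Theta2m (a b τ η : ℝ) : ℝ :=
  ∫ x in (xminus a b τ η)..(0:ℝ), x^2*(1 - τ*x^2) / Real.sqrt (1 - Vpot a b τ η x)

/-- Third component of the period map on the hill interval `[x⁻, 0]`. -/
noncomputable def Theta3m (a b τ η : ℝ) : ℝ :=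
  ∫ x in (xminus a b τ η)..(0:ℝ), η*(b*x + a*x^2)^2 / Real.sqrt (1 - Vpot a b τ η x)

/-! For `b = 0` the hill potential factors as `1 - V(x) = x² (2τ - c x²)` with `c = τ² + a²η²`,
and `c (x⁺)² = 2τ`, so the period map is elementary:
`Θ¹ = aη√(2τ)/c`, `Θ² = √(2τ)(3c - 4τ²)/(3c²)` and `Θ³ = (4a/3)(τ/c) Θ¹`.

If `η ≠ 0` then `Θ¹ ≠ 0`, so the ratio `Θ³/Θ¹` recovers `u = τ/c`; the identity
`(Θ¹)² = 2u(1 - uτ)` then recovers `τ`, hence `c`, hence `η`.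
If `η = 0` then `Θ¹ = 0` forces the other `η` to vanish as well, and `Θ² = -√(2τ)/(3τ²)` is
injective in `τ`. -/

open Set MeasureTheory intervalIntegral

-- The integrands below blow up at the right endpoint; a nonnegative derivative is integrable anyway.
theorem integral_eq_sub_of_hasDerivAt_of_nonneg {f f' : ℝ → ℝ} {a b : ℝ} (hab : a ≤ b)
    (hcont : ContinuousOn f (Icc a b)) (hderiv : ∀ x ∈ Ioo a b, HasDerivAt f (f' x) x)
    (hpos : ∀ x ∈ Ioo a b, 0 ≤ f' x) :
    IntervalIntegrable f' volume a b ∧ ∫ x in a..b, f' x = f b - f a := by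
  have hint : IntervalIntegrable f' volume a b :=
    (intervalIntegrable_iff_integrableOn_Ioc_of_le hab).2
      (integrableOn_deriv_of_nonneg hcont hderiv hpos)
  exact ⟨hint, integral_eq_sub_of_hasDerivAt_of_le hab hcont hderiv hint⟩

section Quadrature

variable {r c X : ℝ}

theorem hasDerivAt_sqrt_sub_mul_sq {x : ℝ} (hx : 0 < r - c * x ^ 2) :
    HasDerivAt (fun y => √(r - c * y ^ 2)) (-(c * x) / √(r - c * x ^ 2)) x := by
  have h := (((hasDerivAt_pow 2 x).const_mul c).const_sub r).sqrt hx.ne'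
  convert h using 1
  have := (Real.sqrt_pos.2 hx).ne'
  field_simp
  ring

theorem sub_mul_sq_pos (hc : 0 < c) (hXr : c * X ^ 2 = r) {x : ℝ} (hx : x ∈ Ioo 0 X) :
    0 < r - c * x ^ 2 := by
  have : x ^ 2 < X ^ 2 := pow_lt_pow_left₀ hx.2 hx.1.le two_ne_zero
  nlinarith

theorem integral_div_sqrt_sub_mul_sq (hc : 0 < c) (hX : 0 ≤ X) (hXr : c * X ^ 2 = r) :
    IntervalIntegrable (fun x => x / √(r - c * x ^ 2)) volume 0 X ∧
      ∫ x in (0:ℝ)..X, x / √(r - c * x ^ 2) = √r / c := by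
  have hcont : Continuous fun y : ℝ => -√(r - c * y ^ 2) / c := by fun_prop
  refine (integral_eq_sub_of_hasDerivAt_of_nonneg hX hcont.continuousOn (fun x hx => ?_)
    fun x hx => div_nonneg hx.1.le (Real.sqrt_nonneg _)).imp_right fun h => ?_
  · have hs := sub_mul_sq_pos hc hXr hx
    refine ((hasDerivAt_sqrt_sub_mul_sq hs).neg.div_const c).congr_deriv ?_
    field_simp
  · rw [h, ← hXr, sub_self, Real.sqrt_zero]
    ring_nf

theorem integral_pow_three_div_sqrt_sub_mul_sq (hc : 0 < c) (hX : 0 ≤ X) (hXr : c * X ^ 2 = r) :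
    IntervalIntegrable (fun x => x ^ 3 / √(r - c * x ^ 2)) volume 0 X ∧
      ∫ x in (0:ℝ)..X, x ^ 3 / √(r - c * x ^ 2) = 2 * r * √r / (3 * c ^ 2) := by
  have hcont : Continuous fun y : ℝ => -√(r - c * y ^ 2) * (c * y ^ 2 + 2 * r) / (3 * c ^ 2) := by
    fun_prop
  refine (integral_eq_sub_of_hasDerivAt_of_nonneg hX hcont.continuousOn (fun x hx => ?_)
    fun x hx => div_nonneg (pow_nonneg hx.1.le 3) (Real.sqrt_nonneg _)).imp_right fun h => ?_
  · have hs := sub_mul_sq_pos hc hXr hx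
    have hS := Real.sq_sqrt hs.le
    refine (((hasDerivAt_sqrt_sub_mul_sq hs).neg.mul
      (((hasDerivAt_pow 2 x).const_mul c).add_const (2 * r))).div_const (3 * c ^ 2)).congr_deriv ?_
    have := (Real.sqrt_pos.2 hs).ne'
    simp only [Pi.neg_apply, Nat.cast_ofNat]
    field_simp
    linear_combination (-2 * x) * hS
  · rw [h, ← hXr, sub_self, Real.sqrt_zero]
    ring_nf

end Quadrature

section FamilyOne

variable {a τ η : ℝ}

theorem xplus_b_zero (hτ : 0 < τ) :
    0 ≤ xplus a 0 τ η ∧ (τ ^ 2 + a ^ 2 * η ^ 2) * xplus a 0 τ η ^ 2 = 2 * τ := by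
  have hc : 0 < τ ^ 2 + a ^ 2 * η ^ 2 := by positivity
  have hX : xplus a 0 τ η = √(2 * τ * (τ ^ 2 + a ^ 2 * η ^ 2)) / (τ ^ 2 + a ^ 2 * η ^ 2) := by
    rw [xplus]
    ring_nf
  refine ⟨hX ▸ by positivity, ?_⟩
  rw [hX, div_pow, Real.sq_sqrt (by positivity)]
  field_simp

theorem sqrt_one_sub_Vpot_b_zero {x : ℝ} (hx : 0 ≤ x) :
    √(1 - Vpot a 0 τ η x) = x * √(2 * τ - (τ ^ 2 + a ^ 2 * η ^ 2) * x ^ 2) := by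
  rw [show 1 - Vpot a 0 τ η x = x ^ 2 * (2 * τ - (τ ^ 2 + a ^ 2 * η ^ 2) * x ^ 2) by
    rw [Vpot]; ring, Real.sqrt_mul (sq_nonneg x), Real.sqrt_sq hx]

theorem integral_div_sqrt_one_sub_Vpot_b_zero (hτ : 0 < τ) (g : ℝ → ℝ) :
    ∫ x in (0:ℝ)..xplus a 0 τ η, x ^ 2 * g x / √(1 - Vpot a 0 τ η x) =
      ∫ x in (0:ℝ)..xplus a 0 τ η, x * g x / √(2 * τ - (τ ^ 2 + a ^ 2 * η ^ 2) * x ^ 2) := by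
  refine integral_congr fun x hx => ?_
  rw [uIcc_of_le (xplus_b_zero hτ).1] at hx
  rw [sqrt_one_sub_Vpot_b_zero hx.1]
  rcases eq_or_ne x 0 with rfl | hx0
  · simp
  · rw [sq, mul_assoc, mul_div_mul_left _ _ hx0]

theorem Theta1p_b_zero (hτ : 0 < τ) :
    Theta1p a 0 τ η = a * η * √(2 * τ) / (τ ^ 2 + a ^ 2 * η ^ 2) := by
  obtain ⟨hX, hXr⟩ := xplus_b_zero (a := a) (η := η) hτ
  have hc : 0 < τ ^ 2 + a ^ 2 * η ^ 2 := by positivity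
  calc Theta1p a 0 τ η
      = ∫ x in (0:ℝ)..xplus a 0 τ η, x ^ 2 * (a * η) / √(1 - Vpot a 0 τ η x) := by
        rw [Theta1p]; congr 1; ext x; ring
    _ = a * η * ∫ x in (0:ℝ)..xplus a 0 τ η, x / √(2 * τ - (τ ^ 2 + a ^ 2 * η ^ 2) * x ^ 2) := by
        rw [integral_div_sqrt_one_sub_Vpot_b_zero hτ, ← intervalIntegral.integral_const_mul]
        congr 1; ext x; ring
    _ = _ := by rw [(integral_div_sqrt_sub_mul_sq hc hX hXr).2]; ring

theorem Theta2p_b_zero (hτ : 0 < τ) :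
    Theta2p a 0 τ η =
      √(2 * τ) * (3 * (τ ^ 2 + a ^ 2 * η ^ 2) - 4 * τ ^ 2) / (3 * (τ ^ 2 + a ^ 2 * η ^ 2) ^ 2) := by
  obtain ⟨hX, hXr⟩ := xplus_b_zero (a := a) (η := η) hτ
  have hc : 0 < τ ^ 2 + a ^ 2 * η ^ 2 := by positivity
  obtain ⟨hint₁, hval₁⟩ := integral_div_sqrt_sub_mul_sq hc hX hXr
  obtain ⟨hint₃, hval₃⟩ := integral_pow_three_div_sqrt_sub_mul_sq hc hX hXr
  calc Theta2p a 0 τ η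
      = ∫ x in (0:ℝ)..xplus a 0 τ η,
          (x / √(2 * τ - (τ ^ 2 + a ^ 2 * η ^ 2) * x ^ 2)
            - τ * (x ^ 3 / √(2 * τ - (τ ^ 2 + a ^ 2 * η ^ 2) * x ^ 2))) := by
        rw [Theta2p, integral_div_sqrt_one_sub_Vpot_b_zero hτ (fun x => 1 - τ * x ^ 2)]
        congr 1; ext x; ring
    _ = _ := by
        rw [intervalIntegral.integral_sub hint₁ (hint₃.const_mul τ),
          intervalIntegral.integral_const_mul, hval₁, hval₃]
        field_simp
        ring

theorem Theta3p_b_zero (hτ : 0 < τ) :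
    Theta3p a 0 τ η = 4 * a ^ 2 * τ * η * √(2 * τ) / (3 * (τ ^ 2 + a ^ 2 * η ^ 2) ^ 2) := by
  obtain ⟨hX, hXr⟩ := xplus_b_zero (a := a) (η := η) hτ
  have hc : 0 < τ ^ 2 + a ^ 2 * η ^ 2 := by positivity
  calc Theta3p a 0 τ η
      = ∫ x in (0:ℝ)..xplus a 0 τ η, x ^ 2 * (η * a ^ 2 * x ^ 2) / √(1 - Vpot a 0 τ η x) := by
        rw [Theta3p]; congr 1; ext x; ring
    _ = η * a ^ 2 *
          ∫ x in (0:ℝ)..xplus a 0 τ η, x ^ 3 / √(2 * τ - (τ ^ 2 + a ^ 2 * η ^ 2) * x ^ 2) := by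
        rw [integral_div_sqrt_one_sub_Vpot_b_zero hτ, ← intervalIntegral.integral_const_mul]
        congr 1; ext x; ring
    _ = _ := by rw [(integral_pow_three_div_sqrt_sub_mul_sq hc hX hXr).2]; ring

theorem Theta1p_b_zero_eq_zero_iff (ha : a ≠ 0) (hτ : 0 < τ) : Theta1p a 0 τ η = 0 ↔ η = 0 := by
  have : √(2 * τ) ≠ 0 := (Real.sqrt_pos.2 (by positivity)).ne'
  have : τ ^ 2 + a ^ 2 * η ^ 2 ≠ 0 := by positivity
  simp_all [Theta1p_b_zero hτ]

theorem Theta1p_b_zero_sq (hτ : 0 < τ) :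
    Theta1p a 0 τ η ^ 2 =
      2 * (τ / (τ ^ 2 + a ^ 2 * η ^ 2)) * (1 - τ / (τ ^ 2 + a ^ 2 * η ^ 2) * τ) := by
  have : τ ^ 2 + a ^ 2 * η ^ 2 ≠ 0 := by positivity
  rw [Theta1p_b_zero hτ, div_pow, mul_pow, Real.sq_sqrt (by positivity)]
  field_simp
  ring

theorem Theta3p_b_zero_eq_mul_Theta1p (hτ : 0 < τ) :
    Theta3p a 0 τ η = 4 * a / 3 * (τ / (τ ^ 2 + a ^ 2 * η ^ 2)) * Theta1p a 0 τ η := by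
  rw [Theta3p_b_zero hτ, Theta1p_b_zero hτ]
  field_simp

theorem Theta2p_b_zero_zero (hτ : 0 < τ) : Theta2p a 0 τ 0 = -√(2 * τ) / (3 * τ ^ 2) := by
  rw [Theta2p_b_zero hτ]
  field_simp
  ring

end FamilyOne

theorem injOn_Theta2p_b_zero_zero (a : ℝ) : InjOn (fun τ => Theta2p a 0 τ 0) (Ioi 0) := by
  intro τ₁ (h₁ : 0 < τ₁) τ₂ (h₂ : 0 < τ₂) h
  have hsq : ∀ τ : ℝ, 0 < τ → Theta2p a 0 τ 0 ^ 2 = 2 / (9 * τ ^ 3) := fun τ hτ => by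
    rw [Theta2p_b_zero_zero hτ, div_pow, neg_sq, Real.sq_sqrt (by positivity)]
    field_simp
    ring
  have h3 : 2 / (9 * τ₁ ^ 3) = 2 / (9 * τ₂ ^ 3) := by
    rw [← hsq τ₁ h₁, ← hsq τ₂ h₂]
    exact congrArg (· ^ 2) h
  have : τ₁ ^ 3 = τ₂ ^ 3 := by
    have := h₁.ne'; have := h₂.ne'
    field_simp at h3
    linarith
  exact (pow_left_inj₀ h₁.le h₂.le three_ne_zero).1 this

theorem eq_of_Theta1p_b_zero_eq_of_Theta3p_b_zero_eq {a τ₁ τ₂ η₁ η₂ : ℝ} (ha : a ≠ 0)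
    (h₁ : 0 < τ₁) (h₂ : 0 < τ₂) (hη₁ : η₁ ≠ 0)
    (e₁ : Theta1p a 0 τ₁ η₁ = Theta1p a 0 τ₂ η₂) (e₃ : Theta3p a 0 τ₁ η₁ = Theta3p a 0 τ₂ η₂) :
    τ₁ = τ₂ ∧ η₁ = η₂ := by
  have hu : τ₁ / (τ₁ ^ 2 + a ^ 2 * η₁ ^ 2) = τ₂ / (τ₂ ^ 2 + a ^ 2 * η₂ ^ 2) := by
    rw [Theta3p_b_zero_eq_mul_Theta1p h₁, Theta3p_b_zero_eq_mul_Theta1p h₂, ← e₁] at e₃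
    exact mul_left_cancel₀ (by positivity) <|
      mul_right_cancel₀ ((Theta1p_b_zero_eq_zero_iff ha h₁).not.2 hη₁) e₃
  have hτ : τ₁ = τ₂ := by
    have hsq := congrArg (· ^ 2) e₁
    simp only [Theta1p_b_zero_sq h₁, Theta1p_b_zero_sq h₂, ← hu] at hsq
    have hpos : 0 < τ₁ / (τ₁ ^ 2 + a ^ 2 * η₁ ^ 2) := by positivity
    exact mul_left_cancel₀ hpos.ne' <|
      sub_right_inj.1 (mul_left_cancel₀ (by positivity) hsq)
  subst hτ
  have hc : a ^ 2 * η₁ ^ 2 = a ^ 2 * η₂ ^ 2 := by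
    have := h₁.ne'
    field_simp at hu
    linarith
  rw [Theta1p_b_zero h₁, Theta1p_b_zero h₁, hc] at e₁
  have := (Real.sqrt_pos.2 (by positivity : 0 < 2 * τ₁)).ne'
  field_simp at e₁
  exact ⟨rfl, e₁⟩

/-- The period map of Family 1 (parameters `(a,0)`, `a ≠ 0`) is one-to-one on
`{(τ,η) : τ > 0}`. -/
theorem stmt_7 (a : ℝ) (ha : a ≠ 0) :
    Set.InjOn
      (fun p : ℝ × ℝ => (Theta1p a 0 p.1 p.2, Theta2p a 0 p.1 p.2, Theta3p a 0 p.1 p.2))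
      {p : ℝ × ℝ | 0 < p.1} := by
  rintro ⟨τ₁, η₁⟩ (h₁ : 0 < τ₁) ⟨τ₂, η₂⟩ (h₂ : 0 < τ₂) h
  simp only [Prod.mk.injEq] at h ⊢
  obtain ⟨e₁, e₂, e₃⟩ := h
  rcases eq_or_ne η₁ 0 with rfl | hη₁
  · obtain rfl : η₂ = 0 := (Theta1p_b_zero_eq_zero_iff ha h₂).1 <|
      e₁ ▸ (Theta1p_b_zero_eq_zero_iff ha h₁).2 rfl
    exact ⟨injOn_Theta2p_b_zero_zero a h₁ h₂ e₂, rfl⟩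
  · exact eq_of_Theta1p_b_zero_eq_of_Theta3p_b_zero_eq ha h₁ h₂ hη₁ e₁ e₃
end

section
/- Let b be a nonzero real number. Then the map (τ,η) ↦ (Θ¹₊(0,b;τ,η), Θ²₊(0,b;τ,η), Θ³₊(0,b;τ,η)), defined on the set {(τ,η) ∈ ℝ² : τ > 0 and b²η² < 2τ}, is injective. -/
/-! With `a = 0` and `X = x⁺`, one has `1 - V(x) = τ²x²(X² - x²)`, so after cancelling `x` the
three components are elementary integrals of `xⁿ / √(X² - x²)` (`n = 0, 1, 3`). Writing `r = η / τ`,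
`Θ¹₊ = π b r / 2`, `Θ²₊ = X (3 b² r² - X²) / 6`, `Θ³₊ = b² r X`, and `2 / τ = X² + b² r²`.
So `Θ¹₊` determines `r`; then `Θ³₊` (if `r ≠ 0`) or `Θ²₊ = -X³ / 6` (if `r = 0`) determines `X > 0`;
and `(r, X)` determines `(τ, η)`. -/

open Set MeasureTheory Real

section
variable {X x : ℝ}

lemma sq_sub_sq_pos_of_mem_Ioo (hx : x ∈ Ioo 0 X) : 0 < X ^ 2 - x ^ 2 := by
  nlinarith [hx.1, hx.2]

lemma hasDerivAt_sqrt_sq_sub_sq (hx : 0 < X ^ 2 - x ^ 2) :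
    HasDerivAt (fun y => √(X ^ 2 - y ^ 2)) (-x / √(X ^ 2 - x ^ 2)) x := by
  have h := ((hasDerivAt_pow 2 x).const_sub (X ^ 2)).sqrt hx.ne'
  convert h using 1
  field_simp
  ring

lemma hasDerivAt_neg_sqrt_sq_sub_sq (hx : 0 < X ^ 2 - x ^ 2) :
    HasDerivAt (fun y => -√(X ^ 2 - y ^ 2)) (x / √(X ^ 2 - x ^ 2)) x :=
  (hasDerivAt_sqrt_sq_sub_sq hx).neg.congr_deriv (by ring)

lemma hasDerivAt_arcsin_div (hx : x ∈ Ioo 0 X) :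
    HasDerivAt (fun y => arcsin (y / X)) (√(X ^ 2 - x ^ 2))⁻¹ x := by
  have hX : 0 < X := hx.1.trans hx.2
  have hxX : x / X < 1 := (div_lt_one hX).2 hx.2
  have h := (hasDerivAt_arcsin (by linarith [div_pos hx.1 hX]) hxX.ne).comp x
    ((hasDerivAt_id x).div_const X)
  refine h.congr_deriv ?_
  rw [show 1 - (x / X) ^ 2 = (X ^ 2 - x ^ 2) / X ^ 2 by field_simp, sqrt_div' _ (sq_nonneg X),
    sqrt_sq hX.le]
  field_simp

lemma hasDerivAt_sqrt_sq_sub_sq_cube_div_three_sub (hx : 0 < X ^ 2 - x ^ 2) :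
    HasDerivAt (fun y => √(X ^ 2 - y ^ 2) ^ 3 / 3 - X ^ 2 * √(X ^ 2 - y ^ 2))
      (x ^ 3 / √(X ^ 2 - x ^ 2)) x := by
  have hs := hasDerivAt_sqrt_sq_sub_sq hx
  refine (((hs.pow 3).div_const 3).sub (hs.const_mul (X ^ 2))).congr_deriv ?_
  have hs0 : √(X ^ 2 - x ^ 2) ≠ 0 := (sqrt_pos.2 hx).ne'
  have hs2 : √(X ^ 2 - x ^ 2) ^ 2 = X ^ 2 - x ^ 2 := sq_sqrt hx.le
  field_simp
  norm_num
  linear_combination (-3 * x) * hs2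

lemma integral_inv_sqrt_sq_sub_sq (hX : 0 < X) :
    ∫ x in 0..X, (√(X ^ 2 - x ^ 2))⁻¹ = π / 2 := by
  have hderiv := fun x (hx : x ∈ Ioo 0 X) => hasDerivAt_arcsin_div hx
  have hcont : ContinuousOn (fun y => arcsin (y / X)) (Icc 0 X) := by fun_prop
  rw [intervalIntegral.integral_eq_sub_of_hasDerivAt_of_le hX.le hcont hderiv
    ((intervalIntegrable_iff_integrableOn_Ioc_of_le hX.le).2
      (intervalIntegral.integrableOn_deriv_of_nonneg hcont hderiv
        fun x _ => inv_nonneg.2 (sqrt_nonneg _)))]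
  simp [div_self hX.ne']

lemma intervalIntegrable_div_sqrt_sq_sub_sq (hX : 0 ≤ X) :
    IntervalIntegrable (fun x => x / √(X ^ 2 - x ^ 2)) volume 0 X :=
  (intervalIntegrable_iff_integrableOn_Ioc_of_le hX).2 <|
    intervalIntegral.integrableOn_deriv_of_nonneg (by fun_prop)
      (fun _ hx => hasDerivAt_neg_sqrt_sq_sub_sq (sq_sub_sq_pos_of_mem_Ioo hx))
      fun _ hx => div_nonneg hx.1.le (sqrt_nonneg _)

lemma integral_div_sqrt_sq_sub_sq (hX : 0 ≤ X) :
    ∫ x in 0..X, x / √(X ^ 2 - x ^ 2) = X := by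
  rw [intervalIntegral.integral_eq_sub_of_hasDerivAt_of_le hX (by fun_prop)
    (fun _ hx => hasDerivAt_neg_sqrt_sq_sub_sq (sq_sub_sq_pos_of_mem_Ioo hx))
    (intervalIntegrable_div_sqrt_sq_sub_sq hX)]
  simp [sqrt_sq hX]

lemma intervalIntegrable_pow_three_div_sqrt_sq_sub_sq (hX : 0 ≤ X) :
    IntervalIntegrable (fun x => x ^ 3 / √(X ^ 2 - x ^ 2)) volume 0 X :=
  (intervalIntegrable_iff_integrableOn_Ioc_of_le hX).2 <|
    intervalIntegral.integrableOn_deriv_of_nonneg (by fun_prop)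
      (fun _ hx => hasDerivAt_sqrt_sq_sub_sq_cube_div_three_sub (sq_sub_sq_pos_of_mem_Ioo hx))
      fun _ hx => div_nonneg (pow_nonneg hx.1.le 3) (sqrt_nonneg _)

lemma integral_pow_three_div_sqrt_sq_sub_sq (hX : 0 ≤ X) :
    ∫ x in 0..X, x ^ 3 / √(X ^ 2 - x ^ 2) = 2 * X ^ 3 / 3 := by
  rw [intervalIntegral.integral_eq_sub_of_hasDerivAt_of_le hX (by fun_prop)
    (fun _ hx => hasDerivAt_sqrt_sq_sub_sq_cube_div_three_sub (sq_sub_sq_pos_of_mem_Ioo hx))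
    (intervalIntegrable_pow_three_div_sqrt_sq_sub_sq hX)]
  simp [sqrt_sq hX]
  ring

end

section
variable {b τ η : ℝ}

lemma xplus_zero (hτ : 0 < τ) : xplus 0 b τ η = √(2 * τ - b ^ 2 * η ^ 2) / τ := by
  rw [xplus, show τ ^ 2 * (2 * τ - b ^ 2 * η ^ 2) + 2 * 0 ^ 2 * η ^ 2 * τ
      = τ ^ 2 * (2 * τ - b ^ 2 * η ^ 2) by ring, sqrt_mul (sq_nonneg τ), sqrt_sq hτ.le]
  field_simp
  ring

lemma xplus_zero_pos (hτ : 0 < τ) (hc : b ^ 2 * η ^ 2 < 2 * τ) : 0 < xplus 0 b τ η := by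
  rw [xplus_zero hτ]
  exact div_pos (sqrt_pos.2 (by linarith)) hτ

lemma xplus_zero_sq (hτ : 0 < τ) (hc : b ^ 2 * η ^ 2 ≤ 2 * τ) :
    xplus 0 b τ η ^ 2 = 2 / τ - b ^ 2 * (η / τ) ^ 2 := by
  rw [xplus_zero hτ, div_pow, sq_sqrt (by linarith)]
  field_simp

lemma sqrt_one_sub_Vpot_zero (hτ : 0 < τ) (hc : b ^ 2 * η ^ 2 ≤ 2 * τ) {x : ℝ} (hx : 0 ≤ x) :
    √(1 - Vpot 0 b τ η x) = τ * x * √(xplus 0 b τ η ^ 2 - x ^ 2) := by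
  have h : 1 - Vpot 0 b τ η x = (τ * x) ^ 2 * (xplus 0 b τ η ^ 2 - x ^ 2) := by
    rw [Vpot, xplus_zero_sq hτ hc]
    field_simp
    ring
  rw [h, sqrt_mul (sq_nonneg _), sqrt_sq (mul_nonneg hτ.le hx)]

lemma Theta1p_zero (hτ : 0 < τ) (hc : b ^ 2 * η ^ 2 < 2 * τ) :
    Theta1p 0 b τ η = π / 2 * b * (η / τ) := by
  set X := xplus 0 b τ η with hXdef
  have hX : 0 < X := xplus_zero_pos hτ hc
  have hcongr : EqOn (fun x => η * (b * x + 0 * x ^ 2) / √(1 - Vpot 0 b τ η x))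
      (fun x => b * (η / τ) * (√(X ^ 2 - x ^ 2))⁻¹) (Ioo 0 X) := fun x hx => by
    have := sqrt_pos.2 (sq_sub_sq_pos_of_mem_Ioo hx)
    simp only
    rw [sqrt_one_sub_Vpot_zero hτ hc.le hx.1.le, ← hXdef]
    field_simp [hx.1.ne']
    ring
  rw [Theta1p, intervalIntegral.integral_congr_Ioo_of_le hX.le hcongr,
    intervalIntegral.integral_const_mul, integral_inv_sqrt_sq_sub_sq hX]
  ring

lemma Theta3p_zero (hτ : 0 < τ) (hc : b ^ 2 * η ^ 2 < 2 * τ) :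
    Theta3p 0 b τ η = b ^ 2 * (η / τ) * xplus 0 b τ η := by
  set X := xplus 0 b τ η with hXdef
  have hX : 0 < X := xplus_zero_pos hτ hc
  have hcongr : EqOn (fun x => η * (b * x + 0 * x ^ 2) ^ 2 / √(1 - Vpot 0 b τ η x))
      (fun x => b ^ 2 * (η / τ) * (x / √(X ^ 2 - x ^ 2))) (Ioo 0 X) := fun x hx => by
    have := sqrt_pos.2 (sq_sub_sq_pos_of_mem_Ioo hx)
    simp only
    rw [sqrt_one_sub_Vpot_zero hτ hc.le hx.1.le, ← hXdef]
    field_simp [hx.1.ne']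
    ring
  rw [Theta3p, intervalIntegral.integral_congr_Ioo_of_le hX.le hcongr,
    intervalIntegral.integral_const_mul, integral_div_sqrt_sq_sub_sq hX.le]

lemma Theta2p_zero (hτ : 0 < τ) (hc : b ^ 2 * η ^ 2 < 2 * τ) :
    Theta2p 0 b τ η = xplus 0 b τ η * (3 * b ^ 2 * (η / τ) ^ 2 - xplus 0 b τ η ^ 2) / 6 := by
  set X := xplus 0 b τ η with hXdef
  have hX : 0 < X := xplus_zero_pos hτ hc
  have hcongr : EqOn (fun x => x ^ 2 * (1 - τ * x ^ 2) / √(1 - Vpot 0 b τ η x))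
      (fun x => τ⁻¹ * (x / √(X ^ 2 - x ^ 2)) - x ^ 3 / √(X ^ 2 - x ^ 2)) (Ioo 0 X) :=
    fun x hx => by
      have := sqrt_pos.2 (sq_sub_sq_pos_of_mem_Ioo hx)
      simp only
      rw [sqrt_one_sub_Vpot_zero hτ hc.le hx.1.le, ← hXdef]
      field_simp [hx.1.ne']
  have hτinv : τ⁻¹ = (X ^ 2 + b ^ 2 * (η / τ) ^ 2) / 2 := by
    rw [hXdef, xplus_zero_sq hτ hc.le]
    ring
  rw [Theta2p, intervalIntegral.integral_congr_Ioo_of_le hX.le hcongr,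
    intervalIntegral.integral_sub ((intervalIntegrable_div_sqrt_sq_sub_sq hX.le).const_mul _)
      (intervalIntegrable_pow_three_div_sqrt_sq_sub_sq hX.le),
    intervalIntegral.integral_const_mul, integral_div_sqrt_sq_sub_sq hX.le,
    integral_pow_three_div_sqrt_sq_sub_sq hX.le, hτinv]
  ring

lemma eq_of_div_eq_of_xplus_zero_eq {τ₁ η₁ τ₂ η₂ : ℝ}
    (hτ₁ : 0 < τ₁) (hc₁ : b ^ 2 * η₁ ^ 2 ≤ 2 * τ₁) (hτ₂ : 0 < τ₂) (hc₂ : b ^ 2 * η₂ ^ 2 ≤ 2 * τ₂)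
    (hr : η₁ / τ₁ = η₂ / τ₂) (hX : xplus 0 b τ₁ η₁ = xplus 0 b τ₂ η₂) : τ₁ = τ₂ ∧ η₁ = η₂ := by
  have hτ : τ₁ = τ₂ := by
    have h := congrArg (· ^ 2) hX
    rw [xplus_zero_sq hτ₁ hc₁, xplus_zero_sq hτ₂ hc₂, hr, sub_left_inj] at h
    field_simp at h
    linarith
  subst hτ
  exact ⟨rfl, (div_left_inj' hτ₁.ne').1 hr⟩

end

/-- The period map of Family 2 (parameters `(0,b)`, `b ≠ 0`) is one-to-one on
`{(τ,η) : τ > 0 and b²η² < 2τ}`. -/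
theorem stmt_8 (b : ℝ) (hb : b ≠ 0) :
    Set.InjOn
      (fun p : ℝ × ℝ => (Theta1p 0 b p.1 p.2, Theta2p 0 b p.1 p.2, Theta3p 0 b p.1 p.2))
      {p : ℝ × ℝ | 0 < p.1 ∧ b^2 * p.2^2 < 2 * p.1} := by
  rintro ⟨τ₁, η₁⟩ ⟨hτ₁, hc₁⟩ ⟨τ₂, η₂⟩ ⟨hτ₂, hc₂⟩ h
  simp only [Prod.mk.injEq] at h
  obtain ⟨h₁, h₂, h₃⟩ := h
  rw [Theta1p_zero hτ₁ hc₁, Theta1p_zero hτ₂ hc₂] at h₁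
  rw [Theta2p_zero hτ₁ hc₁, Theta2p_zero hτ₂ hc₂] at h₂
  rw [Theta3p_zero hτ₁ hc₁, Theta3p_zero hτ₂ hc₂] at h₃
  have hr : η₁ / τ₁ = η₂ / τ₂ :=
    mul_left_cancel₀ (mul_ne_zero (div_ne_zero pi_ne_zero two_ne_zero) hb) h₁
  have hX : xplus 0 b τ₁ η₁ = xplus 0 b τ₂ η₂ := by
    rcases eq_or_ne (η₁ / τ₁) 0 with hr0 | hr0
    · rw [← hr, hr0] at h₂
      refine (pow_left_inj₀ (xplus_zero_pos hτ₁ hc₁).le (xplus_zero_pos hτ₂ hc₂).le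
        three_ne_zero).1 ?_
      linear_combination -6 * h₂
    · rw [← hr] at h₃
      exact mul_left_cancel₀ (mul_ne_zero (pow_ne_zero 2 hb) hr0) h₃
  exact Prod.ext_iff.2 (eq_of_div_eq_of_xplus_zero_eq hτ₁ hc₁.le hτ₂ hc₂.le hr hX)
end

section
/- Let a, b be real numbers and let (τ,η) satisfy τ > 0 and 2τ − b²η² > 0. Set A(τ,η) = a²η² + τ², B(τ,η) = 2abη², C(τ,η) = 2τ − b²η², Δ(τ,η) = B² + 4AC, and define ϑ₁ = 2A/√Δ and ϑ₂ = B/√Δ. Then Δ > 0 on this region, ϑ₁ and ϑ₂ are differentiable, and (∂ϑ₁/∂τ)(∂ϑ₂/∂η) − (∂ϑ₁/∂η)(∂ϑ₂/∂τ) = 2abη(a²η² + τ²)/(2τ² − b²η²τ + 2a²η²)². In particular, this determinant is nonzero whenever abη ≠ 0. -/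
/-!
On the region the discriminant factors as `Δ = B² + 4AC = 4τq` with
`q = 2τ² − b²η²τ + 2a²η² = τ(2τ − b²η²) + 2a²η² > 0`. Both `ϑᵢ` have the form `f / √Δ`, whose partial
derivatives are `(2f'Δ − fΔ')/(2Δ√Δ)`; in the determinant the terms quadratic in `Δ'` cancel and, after
clearing `(√Δ)² = Δ = 4τq`, the remaining polynomial identity is `2abη(a²η² + τ²)/q²`.
-/

open Real

theorem HasDerivAt.div_sqrt {f g : ℝ → ℝ} {f' g' x : ℝ}
    (hf : HasDerivAt f f' x) (hg : HasDerivAt g g' x) (hgx : 0 < g x) :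
    HasDerivAt (fun t => f t / √(g t)) ((2 * f' * g x - f x * g') / (2 * g x * √(g x))) x := by
  refine (hf.div (hg.sqrt hgx.ne') (sqrt_pos.2 hgx).ne').congr_deriv ?_
  field_simp
  linear_combination f x * g' * sq_sqrt hgx.le

theorem DifferentiableAt.div_sqrt {E : Type*} [NormedAddCommGroup E] [NormedSpace ℝ E]
    {f g : E → ℝ} {x : E} (hf : DifferentiableAt ℝ f x) (hg : DifferentiableAt ℝ g x)
    (hgx : 0 < g x) : DifferentiableAt ℝ (fun y => f y / √(g y)) x := by
  simp only [div_eq_mul_inv]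
  exact hf.mul ((hg.sqrt hgx.ne').inv (sqrt_pos.2 hgx).ne')

noncomputable section

namespace PeriodChart

variable (a b : ℝ)

def discr (τ η : ℝ) : ℝ := 4 * τ * (2 * τ ^ 2 - b ^ 2 * η ^ 2 * τ + 2 * a ^ 2 * η ^ 2)

def theta₁ (τ η : ℝ) : ℝ := 2 * (a ^ 2 * η ^ 2 + τ ^ 2) / √(discr a b τ η)

def theta₂ (τ η : ℝ) : ℝ := 2 * a * b * η ^ 2 / √(discr a b τ η)

theorem sq_add_four_mul_eq_discr (τ η : ℝ) :
    (2 * a * b * η ^ 2) ^ 2 + 4 * (a ^ 2 * η ^ 2 + τ ^ 2) * (2 * τ - b ^ 2 * η ^ 2) = discr a b τ η := by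
  rw [discr]; ring

variable {a b} {τ η : ℝ}

theorem discr_factor_pos (hτ : 0 < τ) (hC : 0 < 2 * τ - b ^ 2 * η ^ 2) :
    0 < 2 * τ ^ 2 - b ^ 2 * η ^ 2 * τ + 2 * a ^ 2 * η ^ 2 := by
  nlinarith [mul_pos hτ hC, sq_nonneg (a * η)]

theorem discr_pos (hτ : 0 < τ) (hC : 0 < 2 * τ - b ^ 2 * η ^ 2) : 0 < discr a b τ η :=
  mul_pos (mul_pos four_pos hτ) (discr_factor_pos hτ hC)

theorem hasDerivAt_discr_fst :
    HasDerivAt (discr a b · η) (24 * τ ^ 2 - 8 * b ^ 2 * η ^ 2 * τ + 8 * a ^ 2 * η ^ 2) τ := by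
  have h := ((hasDerivAt_id' τ).const_mul 4).mul
    ((((hasDerivAt_pow 2 τ).const_mul 2).sub ((hasDerivAt_id' τ).const_mul (b ^ 2 * η ^ 2))).add_const
      (2 * a ^ 2 * η ^ 2))
  exact h.congr_deriv (by simp only [Pi.sub_apply]; push_cast; ring)

theorem hasDerivAt_discr_snd :
    HasDerivAt (discr a b τ ·) (16 * a ^ 2 * η * τ - 8 * b ^ 2 * η * τ ^ 2) η := by
  have h := ((((hasDerivAt_pow 2 η).const_mul (b ^ 2)).mul_const τ).const_sub (2 * τ ^ 2)).add
    ((hasDerivAt_pow 2 η).const_mul (2 * a ^ 2)) |>.const_mul (4 * τ)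
  exact h.congr_deriv (by push_cast; ring)

theorem jacobian_theta_eq (hτ : 0 < τ) (hC : 0 < 2 * τ - b ^ 2 * η ^ 2) :
    deriv (theta₁ a b · η) τ * deriv (theta₂ a b τ ·) η
        - deriv (theta₁ a b τ ·) η * deriv (theta₂ a b · η) τ
      = 2 * a * b * η * (a ^ 2 * η ^ 2 + τ ^ 2) / (2 * τ ^ 2 - b ^ 2 * η ^ 2 * τ + 2 * a ^ 2 * η ^ 2) ^ 2 := by
  have hΔ := discr_pos (a := a) hτ hC
  have hq := (discr_factor_pos (a := a) hτ hC).ne'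
  have h₁τ : HasDerivAt (theta₁ a b · η) _ τ :=
    (((hasDerivAt_pow 2 τ).const_add (a ^ 2 * η ^ 2)).const_mul 2).div_sqrt hasDerivAt_discr_fst hΔ
  have h₁η : HasDerivAt (theta₁ a b τ ·) _ η :=
    ((((hasDerivAt_pow 2 η).const_mul (a ^ 2)).add_const (τ ^ 2)).const_mul 2).div_sqrt
      hasDerivAt_discr_snd hΔ
  have h₂τ : HasDerivAt (theta₂ a b · η) _ τ :=
    (hasDerivAt_const τ (2 * a * b * η ^ 2)).div_sqrt hasDerivAt_discr_fst hΔ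
  have h₂η : HasDerivAt (theta₂ a b τ ·) _ η :=
    ((hasDerivAt_pow 2 η).const_mul (2 * a * b)).div_sqrt hasDerivAt_discr_snd hΔ
  rw [h₁τ.deriv, h₁η.deriv, h₂τ.deriv, h₂η.deriv, div_mul_div_comm, div_mul_div_comm,
    div_sub_div_same, ← sq, mul_pow, sq_sqrt hΔ.le]
  unfold discr
  field_simp
  ring

end PeriodChart

end

open PeriodChart in
/-- Nondegeneracy of the change of variables `(τ,η) ↦ (ϑ₁,ϑ₂)` with
`ϑ₁ = 2A/√Δ` and `ϑ₂ = B/√Δ`, where `A = a²η² + τ²`, `B = 2abη²`, `C = 2τ − b²η²`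
and `Δ = B² + 4AC`. -/
theorem stmt_13 (a b : ℝ)
    (A B C Δ : ℝ → ℝ → ℝ) (θ1 θ2 : ℝ → ℝ → ℝ)
    (hA : ∀ τ η, A τ η = a^2*η^2 + τ^2)
    (hB : ∀ τ η, B τ η = 2*a*b*η^2)
    (hC : ∀ τ η, C τ η = 2*τ - b^2*η^2)
    (hΔ : ∀ τ η, Δ τ η = (B τ η)^2 + 4*(A τ η)*(C τ η))
    (hθ1 : ∀ τ η, θ1 τ η = 2*(A τ η) / Real.sqrt (Δ τ η))
    (hθ2 : ∀ τ η, θ2 τ η = (B τ η) / Real.sqrt (Δ τ η)) :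
    ∀ τ η : ℝ, 0 < τ → 0 < 2*τ - b^2*η^2 →
      0 < Δ τ η ∧
      DifferentiableAt ℝ (fun p : ℝ × ℝ => θ1 p.1 p.2) (τ, η) ∧
      DifferentiableAt ℝ (fun p : ℝ × ℝ => θ2 p.1 p.2) (τ, η) ∧
      deriv (fun t => θ1 t η) τ * deriv (fun e => θ2 τ e) η
        - deriv (fun e => θ1 τ e) η * deriv (fun t => θ2 t η) τ
        = 2*a*b*η*(a^2*η^2 + τ^2) / (2*τ^2 - b^2*η^2*τ + 2*a^2*η^2)^2 ∧
      (a*b*η ≠ 0 →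
        2*a*b*η*(a^2*η^2 + τ^2) / (2*τ^2 - b^2*η^2*τ + 2*a^2*η^2)^2 ≠ 0) := by
  intro τ η hτ hpos
  obtain rfl : Δ = discr a b :=
    funext₂ fun τ η => by rw [hΔ, hA, hB, hC, sq_add_four_mul_eq_discr]
  obtain rfl : θ1 = theta₁ a b := funext₂ fun τ η => by rw [hθ1, hA, theta₁]
  obtain rfl : θ2 = theta₂ a b := funext₂ fun τ η => by rw [hθ2, hB, theta₂]
  have hΔpos := discr_pos (a := a) hτ hpos
  refine ⟨hΔpos, ?_, ?_, jacobian_theta_eq hτ hpos, fun habη => ?_⟩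
  · exact DifferentiableAt.div_sqrt (by fun_prop) (by unfold discr; fun_prop) hΔpos
  · exact DifferentiableAt.div_sqrt (by fun_prop) (by unfold discr; fun_prop) hΔpos
  · have hq := discr_factor_pos (a := a) hτ hpos
    have hA₀ : 0 < a ^ 2 * η ^ 2 + τ ^ 2 := by positivity
    refine div_ne_zero (mul_ne_zero ?_ hA₀.ne') (pow_ne_zero 2 hq.ne')
    simpa only [mul_assoc, ne_eq, mul_eq_zero, two_ne_zero, false_or] using habη
end

section
/- Let p, q > 0 be real numbers and let N ⊆ ℝ² be an open, path-connected set contained in the open upper half-plane {(u,v) ∈ ℝ² : v > 0}, such that for every λ > 0 and every (u,v) ∈ N one has (λᵖ u, λ^q v) ∈ N. Then N is simply connected. -/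
open Real Set

/-- An open, path-connected subset of the open upper half-plane that is invariant under
the scalings `(u,v) ↦ (λᵖu, λ^q v)` for all `λ > 0` (with fixed exponents `p, q > 0`)
is simply connected. -/
theorem stmt_14 (p q : ℝ) (hp : 0 < p) (hq : 0 < q)
    (N : Set (ℝ × ℝ)) (hopen : IsOpen N) (hpath : IsPathConnected N)
    (hsub : ∀ z ∈ N, 0 < z.2)
    (hinv : ∀ l : ℝ, 0 < l → ∀ z ∈ N, (l ^ p * z.1, l ^ q * z.2) ∈ N) :
    SimplyConnectedSpace N := by
  classical
  set φ : ℝ × ℝ → ℝ × ℝ := fun z => (z.1 * z.2 ^ (-(p/q)), Real.log z.2) with hφ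
  set ψ : ℝ × ℝ → ℝ × ℝ := fun w => (w.1 * Real.exp (w.2 * (p/q)), Real.exp w.2) with hψ
  have hψφ : ∀ z ∈ N, ψ (φ z) = z := by
    intro z hz
    have h2 : 0 < z.2 := hsub z hz
    simp only [hφ, hψ, Real.exp_log h2]
    have e1 : Real.exp (Real.log z.2 * (p / q)) = z.2 ^ (p/q) := by
      rw [Real.rpow_def_of_pos h2]
    rw [e1]
    have e2 : z.1 * z.2 ^ (-(p / q)) * z.2 ^ (p / q) = z.1 := by
      rw [mul_assoc, ← Real.rpow_add h2]; simp
    rw [e2]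
  have hφψ : ∀ w : ℝ × ℝ, φ (ψ w) = w := by
    intro w
    simp only [hφ, hψ, Real.log_exp]
    have e1 : (Real.exp w.2) ^ (-(p/q)) = Real.exp (w.2 * -(p/q)) := by
      rw [Real.rpow_def_of_pos (Real.exp_pos _), Real.log_exp]
    rw [e1, mul_assoc, ← Real.exp_add]
    simp
  -- the image
  set S : Set ℝ := (fun z : ℝ × ℝ => z.1 * z.2 ^ (-(p/q))) '' N with hS
  have himage : φ '' N = S ×ˢ (univ : Set ℝ) := by
    ext w
    constructor
    · rintro ⟨z, hz, rfl⟩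
      exact ⟨⟨z, hz, rfl⟩, trivial⟩
    · rintro ⟨⟨z, hz, hs⟩, -⟩
      have h2 : 0 < z.2 := hsub z hz
      set l : ℝ := (Real.exp w.2 / z.2) ^ q⁻¹ with hl
      have hlpos : 0 < l := Real.rpow_pos_of_pos (div_pos (Real.exp_pos _) h2) _
      have hlq : l ^ q = Real.exp w.2 / z.2 := by
        rw [hl, Real.rpow_inv_rpow (le_of_lt (div_pos (Real.exp_pos _) h2)) hq.ne']
      refine ⟨(l ^ p * z.1, l ^ q * z.2), hinv l hlpos z hz, ?_⟩
      have h2' : (0:ℝ) < l ^ q * z.2 := mul_pos (Real.rpow_pos_of_pos hlpos _) h2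
      simp only [hφ]
      have e1 : (l ^ q * z.2) ^ (-(p/q)) = l ^ (-p) * z.2 ^ (-(p/q)) := by
        rw [Real.mul_rpow (Real.rpow_pos_of_pos hlpos _).le h2.le,
          ← Real.rpow_mul hlpos.le, mul_neg, mul_div_assoc',
          mul_div_cancel_left₀ _ hq.ne']
      rw [e1]
      have e2 : l ^ p * z.1 * (l ^ (-p) * z.2 ^ (-(p/q))) = z.1 * z.2 ^ (-(p/q)) := by
        have hll : l ^ p * l ^ (-p) = 1 := by
          rw [← Real.rpow_add hlpos]; simp
        calc l ^ p * z.1 * (l ^ (-p) * z.2 ^ (-(p/q)))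
            = (l ^ p * l ^ (-p)) * (z.1 * z.2 ^ (-(p/q))) := by ring
          _ = z.1 * z.2 ^ (-(p/q)) := by rw [hll, one_mul]
      have hs' : z.1 * z.2 ^ (-(p/q)) = w.1 := hs
      rw [e2, hs']
      have e3 : Real.log (l ^ q * z.2) = w.2 := by
        rw [hlq, div_mul_cancel₀ _ h2.ne', Real.log_exp]
      rw [e3]
  -- continuity of φ on N
  have hcont : ContinuousOn φ N := by
    apply ContinuousOn.prodMk
    · exact (continuousOn_fst).mul ((continuousOn_snd).rpow_const
        (fun z hz => Or.inl (hsub z hz).ne'))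
    · exact Real.continuousOn_log.comp continuousOn_snd
        (fun z hz => (hsub z hz).ne')
  -- S is convex, so φ '' N is convex
  have hSpath : IsPathConnected S := hpath.image'
    ((continuousOn_fst).mul ((continuousOn_snd).rpow_const
      (fun z hz => Or.inl (hsub z hz).ne')))
  have hSconv : Convex ℝ S := hSpath.isConnected.isPreconnected.convex
  have hTconv : Convex ℝ (φ '' N) := himage ▸ hSconv.prod convex_univ
  have hTne : (φ '' N).Nonempty := by
    obtain ⟨x, hx, -⟩ := hpath
    exact ⟨φ x, mem_image_of_mem _ hx⟩
  haveI hTcontr : ContractibleSpace (φ '' N) := hTconv.contractibleSpace hTne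
  -- homeomorphism N ≃ₜ φ '' N
  have hψmem : ∀ w : ℝ × ℝ, w ∈ φ '' N → ψ w ∈ N := by
    rintro w ⟨z, hz, rfl⟩
    rwa [hψφ z hz]
  let e : N ≃ₜ (φ '' N) :=
    { toFun := fun z => ⟨φ z, mem_image_of_mem φ z.2⟩
      invFun := fun w => ⟨ψ w, hψmem w w.2⟩
      left_inv := fun z => Subtype.ext (hψφ z z.2)
      right_inv := fun w => Subtype.ext (hφψ w)
      continuous_toFun := Continuous.subtype_mk (hcont.restrict) _
      continuous_invFun := Continuous.subtype_mk
        (show Continuous fun w : (φ '' N) =>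
            ((w : ℝ × ℝ).1 * Real.exp ((w : ℝ × ℝ).2 * (p/q)), Real.exp (w : ℝ × ℝ).2) by
          fun_prop) _ }
  haveI : ContractibleSpace N := e.contractibleSpace
  infer_instance
end

section
/- For every real number β with −1 < β < 1, one has (11β² + 4)√(1 − β²) − (6β³ + 9β)·arccos(β) > 0. -/
/-!
All three functions `ϱ₂`, `ϱ₂'` and `ϱ₁` below vanish at `β = 1`, and differentiating the chain
`ϱ₂ → ϱ₂' → 36 ϱ₁ → -arccos` never produces a `1 / √(1 - β²)` term. Since `arccos > 0` on
`(-1, 1)`, the signs propagate back from the endpoint `1`: `ϱ₁` decreases to `0`, so `ϱ₁ > 0`;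
then `ϱ₂'` increases to `0`, so `ϱ₂' < 0`; then `ϱ₂` decreases to `0`, so `ϱ₂ > 0`.
-/

open Real Set

theorem pos_of_hasDerivAt_neg_of_eq_zero {f f' : ℝ → ℝ} {a b x : ℝ}
    (hf : ContinuousOn f (Icc a b)) (hf' : ∀ y ∈ Ioo a b, HasDerivAt f (f' y) y)
    (hneg : ∀ y ∈ Ioo a b, f' y < 0) (hb : f b = 0) (hx : x ∈ Ico a b) : 0 < f x := by
  have hanti : StrictAntiOn f (Icc a b) :=
    strictAntiOn_of_deriv_neg (convex_Icc a b) hf fun y hy ↦ by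
      rw [interior_Icc] at hy
      exact (hf' y hy).deriv ▸ hneg y hy
  simpa [hb] using hanti (Ico_subset_Icc_self hx) (right_mem_Icc.2 (hx.1.trans hx.2.le)) hx.2

theorem neg_of_hasDerivAt_pos_of_eq_zero {f f' : ℝ → ℝ} {a b x : ℝ}
    (hf : ContinuousOn f (Icc a b)) (hf' : ∀ y ∈ Ioo a b, HasDerivAt f (f' y) y)
    (hpos : ∀ y ∈ Ioo a b, 0 < f' y) (hb : f b = 0) (hx : x ∈ Ico a b) : f x < 0 := by
  have := pos_of_hasDerivAt_neg_of_eq_zero (f := -f) (f' := -f') hf.neg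
    (fun y hy ↦ (hf' y hy).neg) (fun y hy ↦ neg_neg_of_pos (hpos y hy)) (by simp [hb]) hx
  simpa using this

/-- The condition `hr` is exactly what makes the `1 / √(1 - x²)` terms of the derivative cancel. -/
theorem hasDerivAt_mul_sqrt_sub_mul_arccos {p q : ℝ → ℝ} {p' q' r x : ℝ} (hx : x ∈ Ioo (-1) 1)
    (hp : HasDerivAt p p' x) (hq : HasDerivAt q q' x) (hr : q x - x * p x = (1 - x ^ 2) * r) :
    HasDerivAt (fun y ↦ p y * √(1 - y ^ 2) - q y * arccos y)
      ((p' + r) * √(1 - x ^ 2) - q' * arccos x) x := by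
  have hpos : 0 < 1 - x ^ 2 := by nlinarith [hx.1, hx.2]
  have hsqrt : HasDerivAt (fun y ↦ √(1 - y ^ 2)) (-(2 * x) / (2 * √(1 - x ^ 2))) x := by
    simpa using ((hasDerivAt_pow 2 x).const_sub 1).sqrt hpos.ne'
  refine ((hp.mul hsqrt).sub (hq.mul (hasDerivAt_arccos hx.1.ne' hx.2.ne))).congr_deriv ?_
  have hs : √(1 - x ^ 2) ^ 2 = 1 - x ^ 2 := sq_sqrt hpos.le
  have hs0 : √(1 - x ^ 2) ≠ 0 := (sqrt_pos.2 hpos).ne'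
  field_simp
  linear_combination hr - r * hs

noncomputable def ϱ₁ (β : ℝ) : ℝ := √(1 - β ^ 2) - β * arccos β

noncomputable def ϱ₂ (β : ℝ) : ℝ :=
  (11 * β ^ 2 + 4) * √(1 - β ^ 2) - (6 * β ^ 3 + 9 * β) * arccos β

noncomputable def ϱ₂' (β : ℝ) : ℝ := 27 * β * √(1 - β ^ 2) - (18 * β ^ 2 + 9) * arccos β

section

variable {x : ℝ}

theorem hasDerivAt_ϱ₁ (hx : x ∈ Ioo (-1) 1) : HasDerivAt ϱ₁ (-arccos x) x := by
  have h := hasDerivAt_mul_sqrt_sub_mul_arccos (r := 0) hx (hasDerivAt_const x 1)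
    (hasDerivAt_id x) (by simp)
  simp only [one_mul, id] at h
  exact h.congr_deriv (by ring)

theorem hasDerivAt_ϱ₂' (hx : x ∈ Ioo (-1) 1) : HasDerivAt ϱ₂' (36 * ϱ₁ x) x := by
  have hp : HasDerivAt (fun y ↦ 27 * y) 27 x := by simpa using (hasDerivAt_id x).const_mul 27
  have hq : HasDerivAt (fun y ↦ 18 * y ^ 2 + 9) (36 * x) x :=
    (((hasDerivAt_pow 2 x).const_mul 18).add_const 9).congr_deriv (by norm_num; ring)
  exact (hasDerivAt_mul_sqrt_sub_mul_arccos (r := 9) hx hp hq (by ring)).congr_deriv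
    (by simp only [ϱ₁]; ring)

theorem hasDerivAt_ϱ₂ (hx : x ∈ Ioo (-1) 1) : HasDerivAt ϱ₂ (ϱ₂' x) x := by
  have hp : HasDerivAt (fun y ↦ 11 * y ^ 2 + 4) (22 * x) x :=
    (((hasDerivAt_pow 2 x).const_mul 11).add_const 4).congr_deriv (by norm_num; ring)
  have hq : HasDerivAt (fun y ↦ 6 * y ^ 3 + 9 * y) (18 * x ^ 2 + 9) x :=
    (((hasDerivAt_pow 3 x).const_mul 6).add ((hasDerivAt_id x).const_mul 9)).congr_deriv
      (by norm_num; ring)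
  exact (hasDerivAt_mul_sqrt_sub_mul_arccos (r := 5 * x) hx hp hq (by ring)).congr_deriv
    (by simp only [ϱ₂']; ring)

theorem ϱ₁_pos (hx : x ∈ Ioo (-1) 1) : 0 < ϱ₁ x :=
  pos_of_hasDerivAt_neg_of_eq_zero (by unfold ϱ₁; fun_prop) (fun _ hy ↦ hasDerivAt_ϱ₁ hy)
    (fun _ hy ↦ neg_neg_of_pos (arccos_pos.2 hy.2)) (by simp [ϱ₁]) (Ioo_subset_Ico_self hx)

theorem ϱ₂'_neg (hx : x ∈ Ioo (-1) 1) : ϱ₂' x < 0 :=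
  neg_of_hasDerivAt_pos_of_eq_zero (by unfold ϱ₂'; fun_prop) (fun _ hy ↦ hasDerivAt_ϱ₂' hy)
    (fun _ hy ↦ mul_pos (by norm_num) (ϱ₁_pos hy)) (by simp [ϱ₂']) (Ioo_subset_Ico_self hx)

theorem ϱ₂_pos (hx : x ∈ Ioo (-1) 1) : 0 < ϱ₂ x :=
  pos_of_hasDerivAt_neg_of_eq_zero (by unfold ϱ₂; fun_prop) (fun _ hy ↦ hasDerivAt_ϱ₂ hy)
    (fun _ hy ↦ ϱ₂'_neg hy) (by simp [ϱ₂]) (Ioo_subset_Ico_self hx)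

end

/-- Positivity of `ϱ₂(β) = (11β² + 4)√(1 − β²) − (6β³ + 9β)·arccos β` on `(−1, 1)`. -/
theorem stmt_16 (β : ℝ) (h₁ : -1 < β) (h₂ : β < 1) :
    0 < (11*β^2 + 4) * Real.sqrt (1 - β^2) - (6*β^3 + 9*β) * Real.arccos β :=
  ϱ₂_pos ⟨h₁, h₂⟩
end

section
/- For every real number β with −1 < β < 1, one has (2β² + 1)·arccos(β) − 3β√(1 − β²) > 0. -/
/-!
`ϱ₃` vanishes at `1`, and `ϱ₃' = 4g` with `g(x) = x arccos x − √(1 − x²)`. In turn `g(1) = 0` and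
`g' = arccos > 0` on `(−1, 1)`, so `g < 0` there; hence `ϱ₃` is strictly decreasing on `[−1, 1]`
and positive on `[−1, 1)`.
-/

open Real Set

noncomputable def rho3 (x : ℝ) : ℝ :=
  (2 * x ^ 2 + 1) * arccos x - 3 * x * √(1 - x ^ 2)

lemma continuous_rho3 : Continuous rho3 := by
  unfold rho3
  fun_prop

lemma rho3_one : rho3 1 = 0 := by
  simp [rho3]

lemma hasDerivAt_sqrt_one_sub_sq {x : ℝ} (h₁ : x ≠ -1) (h₂ : x ≠ 1) :
    HasDerivAt (fun y ↦ √(1 - y ^ 2)) (-x / √(1 - x ^ 2)) x := by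
  have hx : 1 - x ^ 2 ≠ 0 := by
    rw [sub_ne_zero, ne_comm, Ne, sq_eq_one_iff]
    tauto
  refine (((hasDerivAt_pow 2 x).const_sub 1).sqrt hx).congr_deriv ?_
  push_cast
  ring

lemma hasDerivAt_mul_arccos_sub_sqrt {x : ℝ} (h₁ : x ≠ -1) (h₂ : x ≠ 1) :
    HasDerivAt (fun y ↦ y * arccos y - √(1 - y ^ 2)) (arccos x) x := by
  refine (((hasDerivAt_id x).mul (hasDerivAt_arccos h₁ h₂)).sub
    (hasDerivAt_sqrt_one_sub_sq h₁ h₂)).congr_deriv ?_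
  simp only [id_eq]
  ring

lemma hasDerivAt_rho3 {x : ℝ} (h₁ : x ≠ -1) (h₂ : x ≠ 1) :
    HasDerivAt rho3 (4 * (x * arccos x - √(1 - x ^ 2))) x := by
  have hquad : HasDerivAt (fun y ↦ 2 * y ^ 2 + 1) (2 * (2 * x ^ 1)) x :=
    ((hasDerivAt_pow 2 x).const_mul 2).add_const 1
  refine ((hquad.mul (hasDerivAt_arccos h₁ h₂)).sub
    (((hasDerivAt_id x).const_mul 3).mul (hasDerivAt_sqrt_one_sub_sq h₁ h₂))).congr_deriv ?_
  -- `(1 - x²) / √(1 - x²) = √(1 - x²)` holds also where the square root is `0`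
  have hdiv := div_sqrt (x := 1 - x ^ 2)
  simp only [id_eq]
  linear_combination (-1) * hdiv

lemma mul_arccos_sub_sqrt_neg {x : ℝ} (h₁ : -1 ≤ x) (h₂ : x < 1) :
    x * arccos x - √(1 - x ^ 2) < 0 := by
  have hmono : StrictMonoOn (fun y ↦ y * arccos y - √(1 - y ^ 2)) (Icc (-1) 1) := by
    refine strictMonoOn_of_deriv_pos (convex_Icc _ _) (by fun_prop) fun y hy ↦ ?_
    rw [interior_Icc] at hy
    rw [(hasDerivAt_mul_arccos_sub_sqrt hy.1.ne' hy.2.ne).deriv]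
    exact arccos_pos.mpr hy.2
  simpa using hmono ⟨h₁, h₂.le⟩ ⟨by norm_num, le_rfl⟩ h₂

lemma strictAntiOn_rho3 : StrictAntiOn rho3 (Icc (-1) 1) := by
  refine strictAntiOn_of_deriv_neg (convex_Icc _ _) continuous_rho3.continuousOn fun y hy ↦ ?_
  rw [interior_Icc] at hy
  rw [(hasDerivAt_rho3 hy.1.ne' hy.2.ne).deriv]
  linarith [mul_arccos_sub_sqrt_neg hy.1.le hy.2]

lemma rho3_pos {x : ℝ} (h₁ : -1 ≤ x) (h₂ : x < 1) : 0 < rho3 x :=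
  rho3_one ▸ strictAntiOn_rho3 ⟨h₁, h₂.le⟩ ⟨by norm_num, le_rfl⟩ h₂

/-- Positivity of `ϱ₃(β) = (2β² + 1)·arccos β − 3β√(1 − β²)` on `(−1, 1)`. -/
theorem stmt_17 (β : ℝ) (h₁ : -1 < β) (h₂ : β < 1) :
    0 < (2*β^2 + 1) * Real.arccos β - 3*β*Real.sqrt (1 - β^2) :=
  rho3_pos h₁.le h₂
end
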